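/- arXiv:2505.22518 — 6 statements merged into one kernel-verified Lean document; each statement's English description precedes it below -/
import Mathlib

section
/- Let θ ≥ 1 be real. Then Σ_{n=0}^{∞} (−1)^n / ((2θ + n)(2θ + n + 1)) = ψ(θ + 1/2) − ψ(θ) − 1/(2θ), where ψ denotes the digamma function. -/
/-- The digamma function `ψ`, the derivative of `x ↦ log Γ(x)` (real Gamma). -/
noncomputable def digamma (x : ℝ) : ℝ := deriv (fun y : ℝ => Real.log (Real.Gamma y)) x

/-!
Writing `a n = 1 / (2θ + n)`, the `n`-th term is `(-1)^n (a n - a (n + 1))`, and grouping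
the terms in pairs gives `2 Σₖ (a (2k) - a (2k + 1)) - a 0`.
The remaining series is `½ Σₖ (1/(θ + k) - 1/(θ + 1/2 + k)) = ½ (ψ(θ + 1/2) - ψ(θ))`, which
comes from differentiating Euler's limit formula
`log Γ(x) = lim (x log n + log n! - Σ_{m ≤ n} log (x + m))` term by term: the differentiated
sequence converges uniformly on `(θ/2, ∞)`.
-/

open Real Real.BohrMollerup Filter Topology

theorem hasDerivAt_logGammaSeq (n : ℕ) {x : ℝ} (hx : 0 < x) :
    HasDerivAt (logGammaSeq · n) (log n - ∑ m ∈ Finset.range (n + 1), (x + m)⁻¹) x := by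
  have hlin : HasDerivAt (fun y : ℝ => y * log n + log n.factorial) (log n) x := by
    simpa using ((hasDerivAt_id x).mul_const (log n)).add_const (log n.factorial)
  have hlogs : HasDerivAt (fun y : ℝ => ∑ m ∈ Finset.range (n + 1), log (y + m))
      (∑ m ∈ Finset.range (n + 1), (x + m)⁻¹) x :=
    HasDerivAt.fun_sum fun m _ => by
      simpa using ((hasDerivAt_id x).add_const (m : ℝ)).log (by positivity)
  exact hlin.sub hlogs

theorem hasDerivAt_log_Gamma {x : ℝ} (hx : 0 < x) :
    HasDerivAt (fun y => log (Gamma y)) (digamma x) x := by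
  have hΓ : DifferentiableAt ℝ Gamma x :=
    differentiableAt_Gamma fun m hm => by linarith [hm ▸ hx, (m.cast_nonneg : (0 : ℝ) ≤ m)]
  exact (hΓ.log (Gamma_pos_of_pos hx).ne').hasDerivAt

theorem abs_inv_sub_inv_add_le {a c : ℝ} (ha : 0 < a) (hc : 0 ≤ c) :
    |a⁻¹ - (a + c)⁻¹| ≤ c / a ^ 2 := by
  have hac : 0 < a + c := by linarith
  rw [inv_sub_inv ha.ne' hac.ne', add_sub_cancel_left, abs_of_nonneg (by positivity), sq]
  gcongr
  linarith

theorem hasSum_inv_add_sub_inv_add {x c : ℝ} (hx : 0 < x) (hc : 0 ≤ c) :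
    HasSum (fun m : ℕ => (x + m)⁻¹ - (x + c + m)⁻¹) (digamma (x + c) - digamma x) := by
  set s := Set.Ioi (x / 2)
  set f : ℕ → ℝ → ℝ := fun m y => (y + m)⁻¹ - (y + c + m)⁻¹
  set u : ℕ → ℝ := fun m => c * (1 / |(m : ℝ) + x / 2| ^ (2 : ℝ))
  have hu : Summable u :=
    ((summable_one_div_nat_add_rpow (x / 2) 2).mpr one_lt_two).mul_left c
  have hfu : ∀ m, ∀ y ∈ s, ‖f m y‖ ≤ u m := by
    intro m y hy
    have hm : (0 : ℝ) ≤ m := m.cast_nonneg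
    have hy : x / 2 < y := hy
    have hpos : 0 < (m : ℝ) + x / 2 := by linarith
    calc ‖f m y‖ = |(y + m)⁻¹ - (y + m + c)⁻¹| := by
          simp only [f, Real.norm_eq_abs, add_right_comm]
      _ ≤ c / (y + m) ^ 2 := abs_inv_sub_inv_add_le (by linarith) hc
      _ ≤ c / (x / 2 + m) ^ 2 := by gcongr
      _ = u m := by simp only [u]; rw [abs_of_pos hpos, rpow_two, mul_one_div, add_comm]
  have hlim : TendstoUniformlyOn (fun n y => ∑ m ∈ Finset.range (n + 1), f m y)
      (fun y => ∑' m, f m y) atTop s := fun v hv =>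
    (tendsto_add_atTop_nat 1).eventually (tendstoUniformlyOn_tsum_nat hu hfu v hv)
  have hderiv : ∀ n, ∀ y ∈ s, HasDerivAt
      (fun z => logGammaSeq (z + c) n - logGammaSeq z n)
      (∑ m ∈ Finset.range (n + 1), f m y) y := by
    intro n y hy
    have hy : 0 < y := by linarith [show x / 2 < y from hy]
    refine (((hasDerivAt_logGammaSeq n (by linarith : 0 < y + c)).comp_add_const y c).fun_sub
      (hasDerivAt_logGammaSeq n hy)).congr_deriv ?_
    simp only [f, Finset.sum_sub_distrib]
    ring
  have hvalues : ∀ y ∈ s, Tendsto (fun n => logGammaSeq (y + c) n - logGammaSeq y n) atTop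
      (𝓝 (log (Gamma (y + c)) - log (Gamma y))) := by
    intro y hy
    have hy : 0 < y := by linarith [show x / 2 < y from hy]
    exact (tendsto_log_gamma (by linarith)).sub (tendsto_log_gamma hy)
  have hseries := hasDerivAt_of_tendstoUniformlyOn isOpen_Ioi hlim (.of_forall hderiv) hvalues
    (show x / 2 < x by linarith)
  have hdigamma := ((hasDerivAt_log_Gamma (by linarith : 0 < x + c)).comp_add_const x c).fun_sub
    (hasDerivAt_log_Gamma hx)
  rw [hdigamma.unique hseries]
  exact (hu.of_norm_bounded fun m => hfu m x (show x / 2 < x by linarith)).hasSum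

theorem hasSum_sub_succ_of_antitone {f : ℕ → ℝ} (hf : Antitone f) {l : ℝ}
    (hl : Tendsto f atTop (𝓝 l)) : HasSum (fun n => f n - f (n + 1)) (f 0 - l) := by
  rw [hasSum_iff_tendsto_nat_of_nonneg fun n => sub_nonneg.mpr (hf n.le_succ)]
  simpa only [Finset.sum_range_sub'] using tendsto_const_nhds.sub hl

theorem hasSum_neg_one_pow_mul_sub_succ {a : ℕ → ℝ} (ha : Antitone a)
    (ha0 : Tendsto a atTop (𝓝 0)) {b : ℝ} (hb : HasSum (fun k => a (2 * k) - a (2 * k + 1)) b) :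
    HasSum (fun n => (-1) ^ n * (a n - a (n + 1))) (2 * b - a 0) := by
  have htel : HasSum (fun k => a (2 * k) - a (2 * k + 2)) (a 0) := by
    simpa only [Function.comp, mul_add, mul_one, mul_zero, sub_zero] using
      hasSum_sub_succ_of_antitone (ha.comp_monotone fun _ _ h => Nat.mul_le_mul_left 2 h)
        (ha0.comp (tendsto_id.const_mul_atTop' two_pos))
  have heven : HasSum (fun k => (-1) ^ (2 * k) * (a (2 * k) - a (2 * k + 1))) b := by
    simpa only [pow_mul, neg_one_sq, one_pow, one_mul] using hb
  have hodd : HasSum (fun k => (-1) ^ (2 * k + 1) * (a (2 * k + 1) - a (2 * k + 1 + 1)))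
      (b - a 0) := by
    have hterm : ∀ k : ℕ, (-1 : ℝ) ^ (2 * k + 1) * (a (2 * k + 1) - a (2 * k + 1 + 1)) =
        a (2 * k) - a (2 * k + 1) - (a (2 * k) - a (2 * k + 2)) := fun k => by
      rw [pow_succ, pow_mul, neg_one_sq, one_pow, one_mul]
      ring
    simpa only [hterm] using hb.sub htel
  convert HasSum.even_add_odd (f := fun n => (-1 : ℝ) ^ n * (a n - a (n + 1))) heven hodd
    using 1
  ring

theorem hasSum_neg_one_pow_div_mul_succ {θ : ℝ} (hθ : 0 < θ) :
    HasSum (fun n : ℕ => (-1 : ℝ) ^ n / ((2 * θ + n) * (2 * θ + n + 1)))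
      (digamma (θ + 1 / 2) - digamma θ - 1 / (2 * θ)) := by
  set a : ℕ → ℝ := fun n => (2 * θ + n)⁻¹
  have ha : Antitone a := fun m n h => inv_anti₀ (by positivity) (by gcongr)
  have ha0 : Tendsto a atTop (𝓝 0) :=
    (tendsto_atTop_add_const_left _ (2 * θ) tendsto_natCast_atTop_atTop).inv_tendsto_atTop
  have hpairs : HasSum (fun k => a (2 * k) - a (2 * k + 1))
      ((digamma (θ + 1 / 2) - digamma θ) / 2) := by
    have hhalf := hasSum_inv_add_sub_inv_add hθ (by norm_num : (0 : ℝ) ≤ 1 / 2)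
    refine (hhalf.div_const 2).congr_fun fun k => ?_
    simp only [a]
    push_cast
    field_simp
    ring
  convert hasSum_neg_one_pow_mul_sub_succ ha ha0 hpairs using 1
  · ext n
    simp only [a]
    push_cast
    field_simp
    ring
  · simp only [a]
    ring

/-- For real `θ ≥ 1`,
`Σ_{n=0}^∞ (−1)^n/((2θ+n)(2θ+n+1)) = ψ(θ + 1/2) − ψ(θ) − 1/(2θ)`. -/
theorem stmt_6 (θ : ℝ) (hθ : 1 ≤ θ) :
    Summable (fun n : ℕ => (-1 : ℝ) ^ n / ((2 * θ + n) * (2 * θ + n + 1))) ∧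
    ∑' n : ℕ, (-1 : ℝ) ^ n / ((2 * θ + n) * (2 * θ + n + 1)) =
      digamma (θ + 1 / 2) - digamma θ - 1 / (2 * θ) := by
  have h := hasSum_neg_one_pow_div_mul_succ (by linarith : 0 < θ)
  exact ⟨h.summable, h.tsum_eq⟩
end

section
/- Let θ ≥ 1 be real. Then Kendall's τ for the A1 copula satisfies 1 + 4·∫₀¹ t·(t^{1/θ} − 1)/(1 + t^{1/θ}) dt = 3 + 4θ·(ψ(θ) − ψ(θ + 1/2)), where ψ denotes the digamma function. -/
open Real Set Filter Topology MeasureTheory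

section Digamma

variable {x : ℝ}

lemma differentiableAt_log_Gamma (hx : 0 < x) :
    DifferentiableAt ℝ (fun y : ℝ => log (Gamma y)) x :=
  (differentiableAt_Gamma fun m => by linarith [(Nat.cast_nonneg m : (0 : ℝ) ≤ m)]).log
    (Gamma_pos_of_pos hx).ne'

lemma digamma_add_one (hx : 0 < x) : digamma (x + 1) = digamma x + x⁻¹ := by
  have hshift : HasDerivAt (fun y : ℝ => log (Gamma (y + 1))) (digamma (x + 1)) x :=
    (differentiableAt_log_Gamma (by linarith : 0 < x + 1)).hasDerivAt.comp_add_const x 1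
  have hsplit : (fun y : ℝ => log (Gamma (y + 1))) =ᶠ[𝓝 x] fun y => log (Gamma y) + log y := by
    filter_upwards [eventually_gt_nhds hx] with y hy
    rw [Gamma_add_one hy.ne', log_mul hy.ne' (Gamma_pos_of_pos hy).ne', add_comm]
  exact hshift.unique <| (hsplit.hasDerivAt_iff).2 <|
    (differentiableAt_log_Gamma hx).hasDerivAt.add (hasDerivAt_log hx.ne')

lemma monotoneOn_digamma : MonotoneOn digamma (Ioi 0) :=
  convexOn_log_Gamma.monotoneOn_deriv fun _ hy => differentiableAt_log_Gamma hy

lemma digamma_add_nat (hx : 0 < x) (n : ℕ) :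
    digamma (x + n) = digamma x + ∑ k ∈ Finset.range n, (x + k)⁻¹ := by
  induction n with
  | zero => simp
  | succ n ih =>
    rw [Nat.cast_succ, ← add_assoc, digamma_add_one (by positivity), ih, Finset.sum_range_succ,
      add_assoc]

/-- Monotonicity and the recurrence trap `ψ(x + h + n) - ψ(x + n)` between `0` and `(x + n)⁻¹`,
so the remainder of the telescoping sum vanishes. -/
lemma hasSum_digamma_add_sub_digamma (hx : 0 < x) {h : ℝ} (h0 : 0 ≤ h) (h1 : h ≤ 1) :
    HasSum (fun k : ℕ => (x + k)⁻¹ - (x + h + k)⁻¹) (digamma (x + h) - digamma x) := by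
  have hxh : 0 < x + h := by linarith
  have hterm_nonneg (k : ℕ) : 0 ≤ (x + k)⁻¹ - (x + h + k)⁻¹ :=
    sub_nonneg.2 <| inv_anti₀ (by positivity) (by linarith)
  rw [hasSum_iff_tendsto_nat_of_nonneg hterm_nonneg]
  have hpartial (n : ℕ) : ∑ k ∈ Finset.range n, ((x + k)⁻¹ - (x + h + k)⁻¹) =
      digamma (x + h) - digamma x - (digamma (x + h + n) - digamma (x + n)) := by
    rw [Finset.sum_sub_distrib, digamma_add_nat hx, digamma_add_nat hxh]
    ring
  have hrem_nonneg (n : ℕ) : 0 ≤ digamma (x + h + n) - digamma (x + n) :=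
    sub_nonneg.2 <| monotoneOn_digamma (by simp only [mem_Ioi]; positivity)
      (by simp only [mem_Ioi]; positivity) (by linarith)
  have hrem_le (n : ℕ) : digamma (x + h + n) - digamma (x + n) ≤ (x + n)⁻¹ := by
    have hxn : 0 < x + n := by positivity
    have := monotoneOn_digamma (by simp only [mem_Ioi]; positivity) (mem_Ioi.2 (by linarith))
      (by linarith : x + h + n ≤ x + n + 1)
    linarith [digamma_add_one hxn]
  have hinv : Tendsto (fun n : ℕ => (x + n)⁻¹) atTop (𝓝 0) :=
    tendsto_inv_atTop_zero.comp <| tendsto_atTop_add_const_left _ x tendsto_natCast_atTop_atTop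
  have hrem : Tendsto (fun n : ℕ => digamma (x + h + n) - digamma (x + n)) atTop (𝓝 0) :=
    tendsto_of_tendsto_of_tendsto_of_le_of_le tendsto_const_nhds hinv hrem_nonneg hrem_le
  simpa [hpartial] using (tendsto_const_nhds (x := digamma (x + h) - digamma x)).sub hrem

end Digamma

lemma integral_mul_rpow_pow {a : ℝ} (ha : 0 ≤ a) (m : ℕ) :
    ∫ t in (0 : ℝ)..1, t * (t ^ a) ^ m = (a * m + 2)⁻¹ := by
  have hexp : 0 < a * m + 1 := by positivity
  have hrpow : EqOn (fun t : ℝ => t * (t ^ a) ^ m) (fun t => t ^ (a * m + 1)) (uIcc 0 1) := by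
    intro t ht
    have ht0 : 0 ≤ t := by simpa using ht.1
    show t * (t ^ a) ^ m = t ^ (a * m + 1)
    rw [rpow_add' ht0 hexp.ne', rpow_one, rpow_mul ht0, rpow_natCast, mul_comm]
  rw [intervalIntegral.integral_congr hrpow, integral_rpow (Or.inl (by linarith)),
    one_rpow, zero_rpow (by linarith)]
  ring

lemma hasSum_one_sub_sq_mul_sq_pow {u : ℝ} (hu0 : 0 ≤ u) (hu1 : u ≤ 1) :
    HasSum (fun k : ℕ => (1 - u) ^ 2 * (u ^ 2) ^ k) ((1 - u) / (1 + u)) := by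
  rcases hu1.eq_or_lt with rfl | hu1
  · simp
  have : 1 - u ^ 2 ≠ 0 := by nlinarith
  have hvalue : (1 - u) / (1 + u) = (1 - u) ^ 2 * (1 - u ^ 2)⁻¹ := by
    field_simp
    ring
  rw [hvalue]
  exact (hasSum_geometric_of_lt_one (sq_nonneg u) (by nlinarith)).mul_left _

lemma integral_eq_of_hasSum_of_nonneg {α : Type*} [MeasurableSpace α] {μ : Measure α}
    {F : ℕ → α → ℝ} {f : α → ℝ} {c : ℝ} (hF_int : ∀ k, Integrable (F k) μ)
    (hF_nonneg : ∀ k, 0 ≤ᵐ[μ] F k) (hf : ∀ᵐ a ∂μ, HasSum (F · a) (f a))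
    (hc : HasSum (fun k => ∫ a, F k a ∂μ) c) : ∫ a, f a ∂μ = c := by
  have hnorm (k : ℕ) : ∫ a, ‖F k a‖ ∂μ = ∫ a, F k a ∂μ :=
    integral_congr_ae <| (hF_nonneg k).mono fun a ha => Real.norm_of_nonneg ha
  have hswap := hasSum_integral_of_summable_integral_norm hF_int
    (by simpa only [hnorm] using hc.summable)
  rw [hc.unique hswap]
  exact integral_congr_ae <| hf.mono fun a ha => ha.tsum_eq.symm

section A1

variable {θ : ℝ}

noncomputable def a1Term (θ : ℝ) (k : ℕ) (t : ℝ) : ℝ :=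
  t * (1 - t ^ θ⁻¹) ^ 2 * ((t ^ θ⁻¹) ^ 2) ^ k

lemma continuous_a1Term (hθ : 0 < θ) (k : ℕ) : Continuous (a1Term θ k) := by
  have hrpow := continuous_rpow_const (inv_pos.2 hθ).le
  unfold a1Term
  fun_prop

lemma a1Term_nonneg (k : ℕ) {t : ℝ} (ht : 0 ≤ t) : 0 ≤ a1Term θ k t := by
  unfold a1Term
  positivity

lemma hasSum_a1Term (hθ : 0 < θ) {t : ℝ} (ht : t ∈ Icc (0 : ℝ) 1) :
    HasSum (fun k => a1Term θ k t) (-(t * (t ^ (1 / θ) - 1) / (1 + t ^ (1 / θ)))) := by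
  have hu0 : 0 ≤ t ^ θ⁻¹ := rpow_nonneg ht.1 _
  have hu1 : t ^ θ⁻¹ ≤ 1 := rpow_le_one ht.1 ht.2 (inv_pos.2 hθ).le
  rw [show -(t * (t ^ (1 / θ) - 1) / (1 + t ^ (1 / θ))) = t * ((1 - t ^ θ⁻¹) / (1 + t ^ θ⁻¹)) by
    rw [one_div]; ring]
  exact ((hasSum_one_sub_sq_mul_sq_pow hu0 hu1).mul_left t).congr_fun fun k => mul_assoc _ _ _

lemma integral_a1Term (hθ : 0 < θ) (k : ℕ) :
    ∫ t in (0 : ℝ)..1, a1Term θ k t =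
      θ / 2 * (2 * ((θ + k)⁻¹ - (θ + 1 / 2 + k)⁻¹) - ((θ + k)⁻¹ - (θ + 1 + k)⁻¹)) := by
  have ha : 0 ≤ θ⁻¹ := (inv_pos.2 hθ).le
  have hint (m : ℕ) : IntervalIntegrable (fun t : ℝ => t * (t ^ θ⁻¹) ^ m) volume 0 1 :=
    (continuous_id.mul ((continuous_rpow_const ha).pow m)).intervalIntegrable 0 1
  have hexpand : a1Term θ k = fun t => t * (t ^ θ⁻¹) ^ (2 * k) -
      2 * (t * (t ^ θ⁻¹) ^ (2 * k + 1)) + t * (t ^ θ⁻¹) ^ (2 * k + 2) := by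
    ext t
    simp only [a1Term, ← pow_mul]
    ring
  rw [hexpand, intervalIntegral.integral_add ((hint _).sub ((hint _).const_mul 2)) (hint _),
    intervalIntegral.integral_sub (hint _) ((hint _).const_mul 2),
    intervalIntegral.integral_const_mul, integral_mul_rpow_pow ha, integral_mul_rpow_pow ha,
    integral_mul_rpow_pow ha]
  have : (θ + k) ≠ 0 := by positivity
  have : (2 * θ + 2 * k + 1) ≠ 0 := by positivity
  have : (θ + 1 + k) ≠ 0 := by positivity
  push_cast
  field_simp
  ring

lemma hasSum_integral_a1Term (hθ : 0 < θ) :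
    HasSum (fun k => ∫ t in (0 : ℝ)..1, a1Term θ k t)
      (θ * (digamma (θ + 1 / 2) - digamma θ) - 1 / 2) := by
  have hhalf := hasSum_digamma_add_sub_digamma hθ (h := 1 / 2) (by norm_num) (by norm_num)
  have hone := hasSum_digamma_add_sub_digamma hθ (h := 1) zero_le_one le_rfl
  rw [digamma_add_one hθ, add_sub_cancel_left] at hone
  rw [show θ * (digamma (θ + 1 / 2) - digamma θ) - 1 / 2 =
      θ / 2 * (2 * (digamma (θ + 1 / 2) - digamma θ) - θ⁻¹) by field_simp]
  exact (((hhalf.mul_left 2).sub hone).mul_left (θ / 2)).congr_fun (integral_a1Term hθ)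

lemma integral_a1_integrand (hθ : 0 < θ) :
    ∫ t in (0 : ℝ)..1, t * (t ^ (1 / θ) - 1) / (1 + t ^ (1 / θ)) =
      1 / 2 - θ * (digamma (θ + 1 / 2) - digamma θ) := by
  have hIoc : ∀ᵐ t ∂volume.restrict (Ioc (0 : ℝ) 1), t ∈ Icc (0 : ℝ) 1 :=
    ae_restrict_of_forall_mem measurableSet_Ioc fun t ht => Ioc_subset_Icc_self ht
  have hsum := hasSum_integral_a1Term hθ
  simp only [intervalIntegral.integral_of_le zero_le_one] at hsum ⊢
  rw [← neg_neg (∫ t in Ioc 0 1, _), ← integral_neg,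
    integral_eq_of_hasSum_of_nonneg (fun k => (continuous_a1Term hθ k).integrableOn_Ioc)
      (fun k => hIoc.mono fun t ht => a1Term_nonneg k ht.1)
      (hIoc.mono fun t ht => hasSum_a1Term hθ ht) hsum]
  ring

end A1

/-- For real `θ ≥ 1`, Kendall's τ for the A1 copula satisfies
`1 + 4 ∫₀¹ t (t^{1/θ} − 1)/(1 + t^{1/θ}) dt = 3 + 4θ (ψ(θ) − ψ(θ + 1/2))`. -/
theorem stmt_7 (θ : ℝ) (hθ : 1 ≤ θ) :
    1 + 4 * ∫ t in (0:ℝ)..1, t * (t ^ (1 / θ) - 1) / (1 + t ^ (1 / θ)) =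
      3 + 4 * θ * (digamma θ - digamma (θ + 1 / 2)) := by
  rw [integral_a1_integrand (by linarith)]
  ring
end

section
/- Fix t ∈ (0,1). Then the function h(θ) = θ · log(t^{1/θ} + t^{-1/θ} − 2) is strictly decreasing in θ on [1, ∞). -/
/-!
Since `x + x⁻¹ - 2 = x⁻¹ (1 - x)²`, the function equals `2 θ log (1 - t^{1/θ}) - log t`.
With `u = t^{1/a}` and `r = a / b < 1` for `a < b`, one has `t^{1/b} = u^r`, and the claim
reduces to `1 - u^r < (1 - u)^r`, i.e. `1 < u^r + (1 - u)^r`, which holds because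
`y < y^r` for every `y ∈ (0, 1)`.
-/

open Real Set

lemma Real.one_sub_rpow_lt_rpow_one_sub {x r : ℝ} (hx0 : 0 < x) (hx1 : x < 1) (hr1 : r < 1) :
    1 - x ^ r < (1 - x) ^ r := by
  have hx : x < x ^ r := by
    simpa using rpow_lt_rpow_of_exponent_gt hx0 hx1 hr1
  have hy : 1 - x < (1 - x) ^ r := by
    simpa using rpow_lt_rpow_of_exponent_gt (sub_pos.2 hx1) (by linarith) hr1
  linarith

lemma Real.log_add_inv_sub_two {x : ℝ} (hx0 : x ≠ 0) (hx1 : x ≠ 1) :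
    log (x + x⁻¹ - 2) = 2 * log (1 - x) - log x := by
  have hsq : x + x⁻¹ - 2 = x⁻¹ * (1 - x) ^ 2 := by
    field_simp
    ring
  have h1x : (1 - x) ^ 2 ≠ 0 := pow_ne_zero _ (sub_ne_zero.2 hx1.symm)
  rw [hsq, log_mul (inv_ne_zero hx0) h1x, log_inv, log_pow]
  push_cast
  ring

lemma Real.mul_log_rpow_add_rpow_neg_sub_two {t θ : ℝ} (ht0 : 0 < t) (ht1 : t ≠ 1)
    (hθ : θ ≠ 0) :
    θ * log (t ^ (1 / θ) + t ^ (-(1 / θ)) - 2) = 2 * (θ * log (1 - t ^ (1 / θ))) - log t := by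
  have hx0 : t ^ (1 / θ) ≠ 0 := (rpow_pos_of_pos ht0 _).ne'
  have hx1 : t ^ (1 / θ) ≠ 1 := by
    intro h
    have hlog := congrArg log h
    rw [log_rpow ht0, log_one] at hlog
    exact mul_ne_zero (one_div_ne_zero hθ) (log_ne_zero_of_pos_of_ne_one ht0 ht1) hlog
  rw [rpow_neg ht0.le, log_add_inv_sub_two hx0 hx1, log_rpow ht0]
  field_simp

lemma Real.strictAntiOn_mul_log_one_sub_rpow_one_div {t : ℝ} (ht0 : 0 < t) (ht1 : t < 1) :
    StrictAntiOn (fun θ : ℝ => θ * log (1 - t ^ (1 / θ))) (Ioi 0) := by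
  intro a ha b hb hab
  have ha0 : 0 < a := ha
  have hb0 : 0 < b := hb
  set u := t ^ (1 / a)
  have hu0 : 0 < u := rpow_pos_of_pos ht0 _
  have hu1 : u < 1 := rpow_lt_one ht0.le ht1 (by positivity)
  have hr0 : 0 < a / b := by positivity
  have hr1 : a / b < 1 := (div_lt_one hb0).2 hab
  have hur : t ^ (1 / b) = u ^ (a / b) := by
    rw [← rpow_mul ht0.le]
    congr 1
    field_simp
  have hlog : log (1 - u ^ (a / b)) < a / b * log (1 - u) := by
    rw [← log_rpow (sub_pos.2 hu1)]
    exact log_lt_log (sub_pos.2 (rpow_lt_one hu0.le hu1 hr0))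
      (one_sub_rpow_lt_rpow_one_sub hu0 hu1 hr1)
  show b * log (1 - t ^ (1 / b)) < a * log (1 - u)
  calc b * log (1 - t ^ (1 / b)) < b * (a / b * log (1 - u)) := by
        rw [hur]
        exact mul_lt_mul_of_pos_left hlog hb0
    _ = a * log (1 - u) := by field_simp

/-- For fixed `t ∈ (0,1)`, the function `h(θ) = θ log(t^{1/θ} + t^{-1/θ} − 2)`
is strictly decreasing in `θ` on `[1, ∞)`. -/
theorem stmt_12 (t : ℝ) (ht : t ∈ Set.Ioo (0 : ℝ) 1) :
    StrictAntiOn (fun θ : ℝ => θ * Real.log (t ^ (1 / θ) + t ^ (-(1 / θ)) - 2))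
      (Set.Ici (1 : ℝ)) := by
  obtain ⟨ht0, ht1⟩ := ht
  intro a ha b hb hab
  have ha0 : (0 : ℝ) < a := one_pos.trans_le ha
  have hb0 : (0 : ℝ) < b := one_pos.trans_le hb
  have hdec := strictAntiOn_mul_log_one_sub_rpow_one_div ht0 ht1 ha0 hb0 hab
  simp only [mul_log_rpow_add_rpow_neg_sub_two ht0 ht1.ne ha0.ne',
    mul_log_rpow_add_rpow_neg_sub_two ht0 ht1.ne hb0.ne']
  linarith
end

section
/- Let θ₁, θ₂ ≥ 1 be real. If (t^{1/θ₁} + t^{-1/θ₁} − 2)^{θ₁} = (t^{1/θ₂} + t^{-1/θ₂} − 2)^{θ₂} for all t ∈ (0,1), then θ₁ = θ₂. That is, the map θ ↦ φ_A1(·;θ) is injective on [1, ∞). -/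
/-!
Writing `t^{1/θ} + t^{-1/θ} - 2 = t^{-1/θ} (1 - t^{1/θ})²` gives
`log φ_A1(t;θ) = -log t + 2 θ log (1 - t^{1/θ})`. For fixed `t ∈ (0,1)` the number
`b(θ) = log (1 - t^{1/θ})` is negative and decreases as `θ` grows, so `θ b(θ)` is strictly
decreasing in `θ > 0`: a product of a growing positive factor and a shrinking negative one.
Hence one value of `t` already determines `θ`.
-/

open Real Set

lemma rpow_add_rpow_neg_sub_two {t : ℝ} (ht : 0 < t) (a : ℝ) :
    t ^ a + t ^ (-a) - 2 = t ^ (-a) * (1 - t ^ a) ^ 2 := by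
  have hinv : t ^ (-a) * t ^ a = 1 := by
    rw [← rpow_add ht, neg_add_cancel, rpow_zero]
  linear_combination (2 - t ^ a) * hinv

lemma rpow_lt_one_of_mem_Ioo {t a : ℝ} (ht : t ∈ Ioo (0 : ℝ) 1) (ha : 0 < a) : t ^ a < 1 :=
  rpow_lt_one ht.1.le ht.2 ha

lemma strictAntiOn_mul_log_one_sub_rpow_inv {t : ℝ} (ht : t ∈ Ioo (0 : ℝ) 1) :
    StrictAntiOn (fun θ : ℝ => θ * log (1 - t ^ (1 / θ))) (Ioi 0) := by
  intro θ₁ (hθ₁ : 0 < θ₁) θ₂ (hθ₂ : 0 < θ₂) hlt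
  have hpow : t ^ (1 / θ₁) < t ^ (1 / θ₂) :=
    rpow_lt_rpow_of_exponent_gt ht.1 ht.2 (one_div_lt_one_div_of_lt hθ₁ hlt)
  have hpos : 0 < 1 - t ^ (1 / θ₂) := by
    linarith [rpow_lt_one_of_mem_Ioo ht (one_div_pos.mpr hθ₂)]
  have hlog_lt : log (1 - t ^ (1 / θ₂)) < log (1 - t ^ (1 / θ₁)) :=
    log_lt_log hpos (by linarith)
  have hlog_neg : log (1 - t ^ (1 / θ₂)) < 0 :=
    log_neg hpos (by linarith [rpow_pos_of_pos ht.1 (1 / θ₂)])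
  show θ₂ * log (1 - t ^ (1 / θ₂)) < θ₁ * log (1 - t ^ (1 / θ₁))
  nlinarith

lemma a1_base_pos {t θ : ℝ} (ht : t ∈ Ioo (0 : ℝ) 1) (hθ : 0 < θ) :
    0 < t ^ (1 / θ) + t ^ (-(1 / θ)) - 2 := by
  rw [rpow_add_rpow_neg_sub_two ht.1]
  have hlt := rpow_lt_one_of_mem_Ioo ht (one_div_pos.mpr hθ)
  exact mul_pos (rpow_pos_of_pos ht.1 _) (pow_pos (by linarith) 2)

lemma mul_log_a1_base {t θ : ℝ} (ht : t ∈ Ioo (0 : ℝ) 1) (hθ : 0 < θ) :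
    θ * log (t ^ (1 / θ) + t ^ (-(1 / θ)) - 2) = -log t + 2 * (θ * log (1 - t ^ (1 / θ))) := by
  have hsub : 1 - t ^ (1 / θ) ≠ 0 :=
    (sub_pos.mpr (rpow_lt_one_of_mem_Ioo ht (one_div_pos.mpr hθ))).ne'
  rw [rpow_add_rpow_neg_sub_two ht.1, log_mul (rpow_pos_of_pos ht.1 _).ne' (pow_ne_zero 2 hsub),
    log_rpow ht.1, log_pow]
  field_simp
  push_cast
  ring

lemma strictAntiOn_mul_log_a1_base {t : ℝ} (ht : t ∈ Ioo (0 : ℝ) 1) :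
    StrictAntiOn (fun θ : ℝ => θ * log (t ^ (1 / θ) + t ^ (-(1 / θ)) - 2)) (Ioi 0) := by
  intro θ₁ hθ₁ θ₂ hθ₂ hlt
  simp only [mul_log_a1_base ht hθ₁, mul_log_a1_base ht hθ₂]
  linarith [strictAntiOn_mul_log_one_sub_rpow_inv ht hθ₁ hθ₂ hlt]

/-- Identifiability of the A1 copula: if the A1 generators with parameters
`θ₁, θ₂ ≥ 1` agree on all of `(0,1)`, then `θ₁ = θ₂`. -/
theorem stmt_13 (θ₁ θ₂ : ℝ) (h₁ : 1 ≤ θ₁) (h₂ : 1 ≤ θ₂)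
    (h : ∀ t ∈ Set.Ioo (0 : ℝ) 1,
      (t ^ (1 / θ₁) + t ^ (-(1 / θ₁)) - 2) ^ θ₁ =
        (t ^ (1 / θ₂) + t ^ (-(1 / θ₂)) - 2) ^ θ₂) :
    θ₁ = θ₂ := by
  have hhalf : (1 / 2 : ℝ) ∈ Ioo (0 : ℝ) 1 := by norm_num
  have hθ₁ : (0 : ℝ) < θ₁ := by linarith
  have hθ₂ : (0 : ℝ) < θ₂ := by linarith
  have hlog := congrArg log (h _ hhalf)
  rw [log_rpow (a1_base_pos hhalf hθ₁), log_rpow (a1_base_pos hhalf hθ₂)] at hlog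
  exact (strictAntiOn_mul_log_a1_base hhalf).injOn hθ₁ hθ₂ hlog
end

section
/- Let θ ≥ 1 and s > 0 be real, and define t = ((s^{1/θ} + 2 − √((s^{1/θ} + 2)² − 4))/2)^θ. Then t ∈ (0,1) and φ_A1(t;θ) = (t^{1/θ} + t^{-1/θ} − 2)^θ = s; i.e., the corrected inverse generator formula for A1 is a right inverse of φ_A1(·;θ) on (0, ∞). -/
/-!
Put `a = s^{1/θ}` and `c = a + 2 > 2`. The number `u = (c - √(c² - 4))/2` is the smaller root of
`u² - c u + 1 = 0`, so `0 < u < 1` and `u + u⁻¹ = c`. Since `t = u^θ`, we get `t^{±1/θ} = u^{±1}`,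
hence `φ_A1(t;θ) = (u + u⁻¹ - 2)^θ = a^θ = s`.
-/

/-- The A1 generator `φ_A1(t;θ) = (t^{1/θ} + t^{-1/θ} − 2)^θ` (real powers). -/
noncomputable def phiA1 (θ t : ℝ) : ℝ := (t ^ (1 / θ) + t ^ (-(1 / θ)) - 2) ^ θ

open Real

/-- The smaller root of `u² - c u + 1 = 0`. -/
noncomputable def smallerRoot (c : ℝ) : ℝ := (c - √(c ^ 2 - 4)) / 2

section smallerRoot

variable {c : ℝ}

lemma sqrt_sq_sub_four_lt (hc : 2 ≤ c) : √(c ^ 2 - 4) < c := by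
  rw [sqrt_lt' (by linarith)]
  linarith

lemma smallerRoot_pos (hc : 2 ≤ c) : 0 < smallerRoot c := by
  have := sqrt_sq_sub_four_lt hc
  unfold smallerRoot
  linarith

lemma smallerRoot_lt_one (hc : 2 < c) : smallerRoot c < 1 := by
  have hd : (c - 2) ^ 2 < c ^ 2 - 4 := by nlinarith
  have : c - 2 < √(c ^ 2 - 4) := lt_sqrt_of_sq_lt hd
  unfold smallerRoot
  linarith

lemma smallerRoot_add_inv (hc : 2 ≤ c) : smallerRoot c + (smallerRoot c)⁻¹ = c := by
  have hu := (smallerRoot_pos hc).ne'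
  have hd : √(c ^ 2 - 4) ^ 2 = c ^ 2 - 4 := sq_sqrt (by nlinarith)
  field_simp
  unfold smallerRoot
  nlinarith

end smallerRoot

lemma phiA1_rpow {θ u : ℝ} (hθ : θ ≠ 0) (hu : 0 ≤ u) :
    phiA1 θ (u ^ θ) = (u + u⁻¹ - 2) ^ θ := by
  rw [phiA1, rpow_neg (rpow_nonneg hu θ), one_div, rpow_rpow_inv hu hθ]

/-- For `θ ≥ 1` and `s > 0`, the corrected A1 inverse-generator formula
`t = ((s^{1/θ} + 2 − √((s^{1/θ} + 2)² − 4))/2)^θ` satisfies `t ∈ (0,1)` and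
`φ_A1(t;θ) = s`. -/
theorem stmt_17 (θ s : ℝ) (hθ : 1 ≤ θ) (hs : 0 < s)
    (t : ℝ)
    (htdef : t = ((s ^ (1 / θ) + 2 - Real.sqrt ((s ^ (1 / θ) + 2) ^ 2 - 4)) / 2) ^ θ) :
    t ∈ Set.Ioo (0 : ℝ) 1 ∧ phiA1 θ t = s := by
  have hθ0 : 0 < θ := by linarith
  set a := s ^ (1 / θ) with ha
  have hc : 2 < a + 2 := by linarith [rpow_pos_of_pos hs (1 / θ)]
  have ht : t = smallerRoot (a + 2) ^ θ := htdef
  have hu := smallerRoot_pos hc.le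
  refine ⟨⟨ht ▸ rpow_pos_of_pos hu θ, ht ▸ rpow_lt_one hu.le (smallerRoot_lt_one hc) hθ0⟩, ?_⟩
  rw [ht, phiA1_rpow hθ0.ne' hu.le, smallerRoot_add_inv hc.le, add_sub_cancel_right, ha, one_div,
    rpow_inv_rpow hs.le hθ0.ne']
end

section
/- Let θ ≥ 1 and s > 0 be real, and define t = (s^{1/θ} + 2 − √((s^{1/θ} + 2)² − 4))/2. Then t ∈ (0,1) and φ_A2(t;θ) = ((1 − t)²/t)^θ = s; i.e., the corrected inverse generator formula for A2 is a right inverse of φ_A2(·;θ) on (0, ∞). -/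
/-!
Put `u = s^{1/θ}` and `a = u + 2 > 2`. Then `t` is the smaller root of `t² − a t + 1`, which lies
in `(0, 1)` because the two roots are positive with product `1`. The root equation rearranges to
`(1 − t)² = u t`, so `(1 − t)²/t = u` and raising to the power `θ` gives back `s`.
-/

/-- The A2 generator `φ_A2(t;θ) = ((1 − t)²/t)^θ` (real power). -/
noncomputable def phiA2 (θ t : ℝ) : ℝ := ((1 - t) ^ 2 / t) ^ θ

open Real Set

lemma smallRoot_mem_Ioo {a : ℝ} (ha : 2 < a) : (a - √(a ^ 2 - 4)) / 2 ∈ Ioo 0 1 := by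
  have hd : 0 ≤ a ^ 2 - 4 := by nlinarith
  have hr : √(a ^ 2 - 4) ^ 2 = a ^ 2 - 4 := sq_sqrt hd
  have hr0 : 0 ≤ √(a ^ 2 - 4) := sqrt_nonneg _
  constructor <;> nlinarith

lemma smallRoot_sq_eq {a : ℝ} (ha : 2 ≤ a) :
    ((a - √(a ^ 2 - 4)) / 2) ^ 2 = a * ((a - √(a ^ 2 - 4)) / 2) - 1 := by
  have hr : √(a ^ 2 - 4) ^ 2 = a ^ 2 - 4 := sq_sqrt (by nlinarith)
  linear_combination hr / 4

lemma one_sub_sq_div_eq_of_sq_eq {t u : ℝ} (ht : t ≠ 0) (h : t ^ 2 = (u + 2) * t - 1) :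
    (1 - t) ^ 2 / t = u := by
  rw [div_eq_iff ht]
  linear_combination h

/-- For `θ ≥ 1` and `s > 0`, the corrected A2 inverse-generator formula
`t = (s^{1/θ} + 2 − √((s^{1/θ} + 2)² − 4))/2` satisfies `t ∈ (0,1)` and
`φ_A2(t;θ) = s`. -/
theorem stmt_18 (θ s : ℝ) (hθ : 1 ≤ θ) (hs : 0 < s)
    (t : ℝ)
    (htdef : t = (s ^ (1 / θ) + 2 - Real.sqrt ((s ^ (1 / θ) + 2) ^ 2 - 4)) / 2) :
    t ∈ Set.Ioo (0 : ℝ) 1 ∧ phiA2 θ t = s := by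
  have hu : 0 < s ^ (1 / θ) := rpow_pos_of_pos hs _
  have ht : t ∈ Ioo 0 1 := htdef ▸ smallRoot_mem_Ioo (by linarith)
  have hroot : (1 - t) ^ 2 / t = s ^ (1 / θ) :=
    one_sub_sq_div_eq_of_sq_eq ht.1.ne' (htdef ▸ smallRoot_sq_eq (by linarith))
  refine ⟨ht, ?_⟩
  rw [phiA2, hroot, one_div, rpow_inv_rpow hs.le (by linarith)]
end
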